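/- arXiv:2205.14196 — 2 statements merged into one kernel-verified Lean document; each statement's English description precedes it below -/
import Mathlib

section
/- For fixed k ≥ 1 and fixed α with 0 < α < 1, the Berk–Jones statistic φ_BJ(α, k, n) = n · KL(k/n, α) is monotonically nonincreasing in n for n in the range k ≤ n ≤ k/α (i.e., while k/n ≥ α), where KL is the truncated binary KL divergence. -/
/-!
On `[k, k / α]` the truncation in `KLdiv (k / n) α` is inactive, and
`n * KL(k / n, α) = k log (k / α) + (n - k) log (n - k) - n log n - (n - k) log (1 - α)`.
Its derivative in `n` is `log ((n - k) / (n (1 - α)))`, which is `≤ 0` exactly when `n α ≤ k`.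
-/

/-- Truncated binary KL divergence. -/
noncomputable def KLdiv (a b : ℝ) : ℝ :=
  if b ≤ a then a * Real.log (a / b) + (1 - a) * Real.log ((1 - a) / (1 - b)) else 0

/-- Berk–Jones statistic. -/
noncomputable def phiBJ (α k n : ℝ) : ℝ := n * KLdiv (k / n) α

open Real Set

lemma mul_log_div_of_pos (x : ℝ) {y : ℝ} (hy : 0 < y) :
    x * log (x / y) = x * log x - x * log y := by
  rcases eq_or_ne x 0 with rfl | hx
  · simp
  · rw [log_div hx hy.ne', mul_sub]

lemma phiBJ_eqOn_Icc {α k : ℝ} (hα : 0 < α) (hα1 : α < 1) (hk : 0 < k) :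
    EqOn (phiBJ α k)
      (fun n ↦ k * log (k / α) + (n - k) * log (n - k) - n * log n - (n - k) * log (1 - α))
      (Icc k (k / α)) := by
  rintro n ⟨hkn, hnk⟩
  have hn : 0 < n := hk.trans_le hkn
  have hα_le : α ≤ k / n := by
    rw [le_div_iff₀ hn, mul_comm]; exact (le_div_iff₀ hα).1 hnk
  have h1α : 0 < 1 - α := sub_pos.2 hα1
  calc phiBJ α k n
      = k * log (k / α / n) + (n - k) * log ((n - k) / (n * (1 - α))) := by
        simp only [phiBJ, KLdiv, if_pos hα_le]
        rw [div_right_comm, show (1 - k / n) / (1 - α) = (n - k) / (n * (1 - α)) by field_simp]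
        field_simp
    _ = _ := by
        rw [log_div (by positivity) hn.ne', mul_log_div_of_pos _ (by positivity),
          log_mul hn.ne' h1α.ne']
        ring

lemma hasDerivAt_sub_mul_log_sub (c k a : ℝ) {n : ℝ} (hn : n ≠ 0) (hnk : n - k ≠ 0) :
    HasDerivAt (fun n ↦ c + (n - k) * log (n - k) - n * log n - (n - k) * a)
      (log (n - k) - log n - a) n := by
  have hsub : HasDerivAt (fun n ↦ n - k) 1 n := (hasDerivAt_id n).sub_const k
  refine (((((hasDerivAt_mul_log hnk).comp n hsub).const_add c).sub
    (hasDerivAt_mul_log hn)).sub (hsub.mul_const a)).congr_deriv ?_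
  ring

lemma antitoneOn_sub_mul_log_sub {α k : ℝ} (c : ℝ) (hα : 0 < α) (hα1 : α < 1)
    (hk : 0 < k) :
    AntitoneOn (fun n ↦ c + (n - k) * log (n - k) - n * log n - (n - k) * log (1 - α))
      (Icc k (k / α)) := by
  refine antitoneOn_of_hasDerivWithinAt_nonpos (convex_Icc _ _) ?_
    (fun n hn ↦ ?_) (f' := fun n ↦ log (n - k) - log n - log (1 - α)) fun n hn ↦ ?_
  · have hne : ∀ n ∈ Icc k (k / α), n ≠ 0 := fun n hn ↦ (hk.trans_le hn.1).ne'
    fun_prop (disch := assumption)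
  · rw [interior_Icc] at hn
    exact (hasDerivAt_sub_mul_log_sub c k _ (hk.trans hn.1).ne'
      (sub_pos.2 hn.1).ne').hasDerivWithinAt
  · rw [interior_Icc] at hn
    have hn0 : 0 < n := hk.trans hn.1
    have hle : n - k ≤ n * (1 - α) := by nlinarith [(lt_div_iff₀ hα).1 hn.2]
    have hlog := log_le_log (sub_pos.2 hn.1) hle
    rw [log_mul hn0.ne' (sub_pos.2 hα1).ne'] at hlog
    linarith

/-- For fixed `k ≥ 1` and `0 < α < 1`, the Berk–Jones statistic is monotonically
nonincreasing in `n` in the range `k ≤ n ≤ k / α`. -/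
theorem stmt_5 (α k n₁ n₂ : ℝ) (hα : 0 < α) (hα1 : α < 1) (hk : 1 ≤ k)
    (hn : n₁ ≤ n₂) (h₁ : k ≤ n₁) (h₂ : n₂ ≤ k / α) :
    phiBJ α k n₂ ≤ phiBJ α k n₁ := by
  have hk0 : 0 < k := one_pos.trans_le hk
  have hanti := (antitoneOn_sub_mul_log_sub (k * log (k / α)) hα hα1 hk0).congr
    (phiBJ_eqOn_Icc hα hα1 hk0).symm
  exact hanti ⟨h₁, hn.trans h₂⟩ ⟨h₁.trans hn, h₂⟩ hn
end

section
/- Let a_1,...,a_T be real numbers and define p(x) = (#{t : a_t ≥ x})/T for x ∈ ℝ, with T ≥ 1. Then for any α ∈ [0,1], the number of indices j such that p(a_j) ≤ α is at most ⌊αT⌋ + m, where m is the maximum multiplicity of any value among a_1,...,a_T; in particular, if all a_t are distinct, at most ⌊αT⌋ + 1 of the empirical p-values p(a_j) are ≤ α. -/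
/-!
Among the indices `j` with `#{t | a j ≤ a t} ≤ k`, pick one with the smallest value `a j₀`.
Every other such index `j` has `a j₀ ≤ a j`, so it is counted in `#{t | a j₀ ≤ a t} ≤ k`.
Hence at most `⌊α T⌋` of the empirical p-values are `≤ α`, which is stronger than both bounds.
-/

open Finset

section
variable {ι β : Type*} [Fintype ι] [LinearOrder β]

theorem card_filter_card_ge_le (a : ι → β) (k : ℕ) :
    #{j | #{t | a j ≤ a t} ≤ k} ≤ k := by
  set S : Finset ι := {j | #{t | a j ≤ a t} ≤ k}
  rcases S.eq_empty_or_nonempty with hS | hS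
  · simp [hS]
  obtain ⟨j₀, hj₀, hmin⟩ := S.exists_min_image a hS
  have hsub : S ⊆ ({t | a j₀ ≤ a t} : Finset ι) := fun j hj =>
    mem_filter.2 ⟨mem_univ j, hmin j hj⟩
  exact (card_le_card hsub).trans (mem_filter.1 hj₀).2

theorem card_filter_empiricalPValue_le (a : ι → β) {α : ℝ} (hα : 0 ≤ α) :
    #{j | (#{t | a j ≤ a t} : ℝ) / Fintype.card ι ≤ α} ≤ ⌊α * Fintype.card ι⌋₊ := by
  rcases isEmpty_or_nonempty ι with hι | hι
  · simp
  have hcard : (0 : ℝ) < Fintype.card ι := by exact_mod_cast Fintype.card_pos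
  have hiff (j : ι) : (#{t | a j ≤ a t} : ℝ) / Fintype.card ι ≤ α ↔
      #{t | a j ≤ a t} ≤ ⌊α * Fintype.card ι⌋₊ := by
    rw [div_le_iff₀ hcard, Nat.le_floor_iff (by positivity)]
  simp only [hiff]
  exact card_filter_card_ge_le a _

end

theorem stmt_18_general (T : ℕ) (a : Fin T → ℝ) (α : ℝ) (hα₀ : 0 ≤ α) :
    (((Finset.univ.filter (fun j =>
        ((Finset.univ.filter (fun t => a t ≥ a j)).card : ℝ) / T ≤ α)).card : ℤ) ≤
      ⌊α * T⌋ + ((Finset.univ.sup (fun t : Fin T =>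
        (Finset.univ.filter (fun s => a s = a t)).card) : ℕ) : ℤ)) ∧
    (Function.Injective a →
      (((Finset.univ.filter (fun j =>
        ((Finset.univ.filter (fun t => a t ≥ a j)).card : ℝ) / T ≤ α)).card : ℤ) ≤
      ⌊α * T⌋ + 1)) := by
  have key : ((#{j | (#{t | a t ≥ a j} : ℝ) / T ≤ α} : ℕ) : ℤ) ≤ ⌊α * T⌋ := by
    rw [← Int.natCast_floor_eq_floor (by positivity)]
    exact_mod_cast by simpa using card_filter_empiricalPValue_le a hα₀
  exact ⟨key.trans (le_add_of_nonneg_right (Nat.cast_nonneg _)),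
    fun _ => key.trans (le_add_of_nonneg_right zero_le_one)⟩

/-- Super-uniformity of empirical p-values computed from the same sample: the number of
indices `j` with `p (a j) ≤ α` is at most `⌊α * T⌋` plus the maximum multiplicity of a
value; if all values are distinct, at most `⌊α * T⌋ + 1`. -/
theorem stmt_18 (T : ℕ) (hT : 1 ≤ T) (a : Fin T → ℝ) (α : ℝ) (hα₀ : 0 ≤ α) (hα₁ : α ≤ 1) :
    (((Finset.univ.filter (fun j =>
        ((Finset.univ.filter (fun t => a t ≥ a j)).card : ℝ) / T ≤ α)).card : ℤ) ≤
      ⌊α * T⌋ + ((Finset.univ.sup (fun t : Fin T =>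
        (Finset.univ.filter (fun s => a s = a t)).card) : ℕ) : ℤ)) ∧
    (Function.Injective a →
      (((Finset.univ.filter (fun j =>
        ((Finset.univ.filter (fun t => a t ≥ a j)).card : ℝ) / T ≤ α)).card : ℤ) ≤
      ⌊α * T⌋ + 1)) :=
  stmt_18_general T a α hα₀
end
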